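/- arXiv:1509.06591 — 3 statements merged into one kernel-verified Lean document; each statement's English description precedes it below -/
import Mathlib

section
/- For any density matrix ρ supported on the symmetric subspace ∨^k ℂ^d, the map E(ρ) = Tr_{2..k}[ (I ⊗ ρ) · Σ_{π ∈ S_{k+1}} W_π ] (partial trace over the last k factors) is proportional to tr(ρ)·I + k·ρ₁, where ρ₁ is the one-particle reduced density matrix of ρ. -/
open Matrix Kronecker BigOperators
open scoped ComplexOrder

/-- Partial trace over the second (B) tensor factor. -/
noncomputable def ptraceB {A B : Type*} [Fintype B]
    (M : Matrix (A × B) (A × B) ℂ) : Matrix A A ℂ :=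
  Matrix.of fun a a' => ∑ b, M (a, b) (a', b)

/-- The marginal of a state on `A × (B₁ × ⋯ × B_k)` on the subsystems `A, B_i`. -/
noncomputable def margAB {A B : Type*} {k : ℕ} [Fintype B] [DecidableEq B] (i : Fin k)
    (ρ : Matrix (A × (Fin k → B)) (A × (Fin k → B)) ℂ) : Matrix (A × B) (A × B) ℂ :=
  Matrix.of fun p q => ∑ f : Fin k → B,
    if f i = p.2 then ρ (p.1, f) (q.1, Function.update f i q.2) else 0

/-- A density matrix: positive semidefinite with unit trace. -/
def IsDensity {n : Type*} [Fintype n] (ρ : Matrix n n ℂ) : Prop :=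
  ρ.PosSemidef ∧ ρ.trace = 1

/-- A bipartite state is separable if it is a finite convex combination of
product density matrices. -/
def IsSep {A B : Type*} [Fintype A] [Fintype B]
    (ρ : Matrix (A × B) (A × B) ℂ) : Prop :=
  ∃ (n : ℕ) (p : Fin n → ℝ) (σA : Fin n → Matrix A A ℂ) (σB : Fin n → Matrix B B ℂ),
    (∀ i, 0 ≤ p i) ∧ (∑ i, p i = 1) ∧ (∀ i, IsDensity (σA i)) ∧ (∀ i, IsDensity (σB i)) ∧
    ρ = ∑ i, (p i : ℂ) • (σA i ⊗ₖ σB i)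

/-- `ρAB` has a `k`-symmetric extension. -/
def HasSymExt {A B : Type*} [Fintype A] [Fintype B] [DecidableEq B] (k : ℕ)
    (ρAB : Matrix (A × B) (A × B) ℂ) : Prop :=
  ∃ ρ : Matrix (A × (Fin k → B)) (A × (Fin k → B)) ℂ,
    IsDensity ρ ∧ ∀ i : Fin k, margAB i ρ = ρAB

/-- The permutation operator `W_π` on `(ℂ^B)^{⊗ k}`,
`W_π |i_1 … i_k⟩ = |i_{π⁻¹(1)} … i_{π⁻¹(k)}⟩`. -/
noncomputable def Wperm {k : ℕ} {B : Type*} [DecidableEq B] (π : Equiv.Perm (Fin k)) :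
    Matrix (Fin k → B) (Fin k → B) ℂ :=
  Matrix.of fun f g => if f = g ∘ ⇑π⁻¹ then 1 else 0

/-- `(1/k!) ∑_π W_π`. -/
noncomputable def symProj {k : ℕ} {B : Type*} [DecidableEq B] :
    Matrix (Fin k → B) (Fin k → B) ℂ :=
  ((k.factorial : ℂ))⁻¹ • ∑ π : Equiv.Perm (Fin k), Wperm π

/-- `ρAB` has a `k`-bosonic extension: a `k`-symmetric extension whose support on the
`B` systems lies in the symmetric subspace. -/
def HasBosonicExt {A B : Type*} [Fintype A] [DecidableEq A] [Fintype B] [DecidableEq B] (k : ℕ)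
    (ρAB : Matrix (A × B) (A × B) ℂ) : Prop :=
  ∃ ρ : Matrix (A × (Fin k → B)) (A × (Fin k → B)) ℂ,
    IsDensity ρ ∧ (∀ i : Fin k, margAB i ρ = ρAB) ∧
    ((1 : Matrix A A ℂ) ⊗ₖ symProj) * ρ * ((1 : Matrix A A ℂ) ⊗ₖ symProj) = ρ

/-- One-particle reduced density matrix on the `i`-th factor. -/
noncomputable def marg1 {k : ℕ} {B : Type*} [Fintype B] [DecidableEq B] (i : Fin k)
    (ρ : Matrix (Fin k → B) (Fin k → B) ℂ) : Matrix B B ℂ :=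
  Matrix.of fun b b' => ∑ f : Fin k → B,
    if f i = b then ρ f (Function.update f i b') else 0

/-
Right multiplication by `∑_π W_π` turns the `(a, a')` entry of the partial trace into a sum over
`σ ∈ S_{k+1}` of `(I ⊗ ρ)` evaluated at permuted indices. Writing `σ = (0 p) · (1 × e)` with
`e ∈ S_k`, the permutations with `p = 0` each contribute `δ_{aa'} tr ρ`, and those with `p = i + 1`
each contribute the `(a, a')` entry of the `i`-th one-particle marginal; in both cases `e` is
absorbed because `ρ = P ρ P` is invariant under every `W_e` on either side. The same invariance
makes all `k` marginals equal, so the whole sum is `k! (tr ρ · I + k ρ₁)`.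
-/

section Wperm
variable {k : ℕ} {B : Type*} [DecidableEq B] [Fintype B]

theorem mul_Wperm_apply (M : Matrix (Fin k → B) (Fin k → B) ℂ) (σ : Equiv.Perm (Fin k))
    (f g : Fin k → B) : (M * Wperm σ : Matrix (Fin k → B) (Fin k → B) ℂ) f g = M f (g ∘ ⇑σ⁻¹) := by
  simp [Wperm, Matrix.mul_apply, mul_ite]

theorem Wperm_mul_apply (σ : Equiv.Perm (Fin k)) (M : Matrix (Fin k → B) (Fin k → B) ℂ)
    (f g : Fin k → B) : (Wperm σ * M : Matrix (Fin k → B) (Fin k → B) ℂ) f g = M (f ∘ ⇑σ) g := by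
  simp [Wperm, Matrix.mul_apply, Equiv.Perm.inv_def, Equiv.eq_comp_symm, eq_comm]

theorem Wperm_mul_Wperm (π σ : Equiv.Perm (Fin k)) :
    (Wperm π * Wperm σ : Matrix (Fin k → B) (Fin k → B) ℂ) = Wperm (π * σ) := by
  ext f g
  rw [mul_Wperm_apply]
  simp only [Wperm, of_apply, _root_.mul_inv_rev, Equiv.Perm.coe_mul]
  rfl

theorem symProj_mul_Wperm (σ : Equiv.Perm (Fin k)) :
    (symProj * Wperm σ : Matrix (Fin k → B) (Fin k → B) ℂ) = symProj := by
  simp only [symProj, smul_mul, Finset.sum_mul, Wperm_mul_Wperm]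
  congr 1
  exact Fintype.sum_equiv (Equiv.mulRight σ) _ _ fun _ => rfl

theorem Wperm_mul_symProj (σ : Equiv.Perm (Fin k)) :
    (Wperm σ * symProj : Matrix (Fin k → B) (Fin k → B) ℂ) = symProj := by
  simp only [symProj, Matrix.mul_smul, Finset.mul_sum, Wperm_mul_Wperm]
  congr 1
  exact Fintype.sum_equiv (Equiv.mulLeft σ) _ _ fun _ => rfl

theorem mul_sum_Wperm_apply (M : Matrix (Fin k → B) (Fin k → B) ℂ) (f g : Fin k → B) :
    (M * ∑ π : Equiv.Perm (Fin k), Wperm π : Matrix (Fin k → B) (Fin k → B) ℂ) f g =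
      ∑ σ : Equiv.Perm (Fin k), M f (g ∘ ⇑σ) := by
  simp only [Matrix.mul_sum, Matrix.sum_apply, mul_Wperm_apply]
  exact Fintype.sum_equiv (Equiv.inv _) _ _ fun _ => rfl

end Wperm

section Symmetric
variable {k : ℕ} {B : Type*} [DecidableEq B] [Fintype B] {ρ : Matrix (Fin k → B) (Fin k → B) ℂ}

theorem Wperm_mul_eq_self (hρ : symProj * ρ * symProj = ρ) (σ : Equiv.Perm (Fin k)) :
    Wperm σ * ρ = ρ := by
  rw [← hρ, ← mul_assoc, ← mul_assoc, Wperm_mul_symProj]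

theorem mul_Wperm_eq_self (hρ : symProj * ρ * symProj = ρ) (σ : Equiv.Perm (Fin k)) :
    ρ * Wperm σ = ρ := by
  rw [← hρ, mul_assoc, symProj_mul_Wperm]

theorem apply_comp_perm_left (hρ : symProj * ρ * symProj = ρ) (σ : Equiv.Perm (Fin k))
    (f g : Fin k → B) : ρ (f ∘ ⇑σ) g = ρ f g := by
  rw [← Wperm_mul_apply σ ρ, Wperm_mul_eq_self hρ]

theorem apply_comp_perm_right (hρ : symProj * ρ * symProj = ρ) (σ : Equiv.Perm (Fin k))
    (f g : Fin k → B) : ρ f (g ∘ ⇑σ) = ρ f g := by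
  rw [← inv_inv σ, ← mul_Wperm_apply ρ σ⁻¹, mul_Wperm_eq_self hρ]

theorem marg1_eq_of_symProj (hρ : symProj * ρ * symProj = ρ) (i j : Fin k) :
    marg1 i ρ = marg1 j ρ := by
  ext b b'
  let s := Equiv.swap i j
  refine Fintype.sum_equiv (s.arrowCongr (Equiv.refl B)) _ _ fun f => ?_
  have hcomp : s.arrowCongr (Equiv.refl B) f = f ∘ ⇑s := by
    ext; simp [s, Equiv.arrowCongr_apply, Equiv.symm_swap]
  have hupd : Function.update (f ∘ ⇑s) j b' = Function.update f i b' ∘ ⇑s := by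
    rw [Function.update_comp_equiv]; simp [s]
  rw [hcomp, hupd, apply_comp_perm_left hρ, apply_comp_perm_right hρ]
  simp [s]

end Symmetric

section Decompose
open Equiv.Perm
variable {k : ℕ} {B : Type*}

theorem cons_comp_decomposeFin_symm_zero (x : B) (h : Fin k → B) (e : Equiv.Perm (Fin k)) :
    (Fin.cons x h : Fin (k + 1) → B) ∘ ⇑(decomposeFin.symm (0, e)) = Fin.cons x (h ∘ ⇑e) := by
  ext j
  refine Fin.cases ?_ (fun j => ?_) j <;>
    simp [decomposeFin_symm_apply_zero, decomposeFin_symm_apply_succ]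

theorem cons_comp_decomposeFin_symm_succ (x : B) (h : Fin k → B) (i : Fin k)
    (e : Equiv.Perm (Fin k)) :
    (Fin.cons x h : Fin (k + 1) → B) ∘ ⇑(decomposeFin.symm (i.succ, e)) =
      Fin.cons (h i) (Function.update h i x ∘ ⇑e) := by
  ext j
  refine Fin.cases ?_ (fun j => ?_) j
  · simp [decomposeFin_symm_apply_zero]
  · by_cases hj : e j = i
    · simp [decomposeFin_symm_apply_succ, hj]
    · simp [decomposeFin_symm_apply_succ, hj, Equiv.swap_apply_of_ne_of_ne, Fin.succ_ne_zero]

theorem sum_perm_cons_comp {M : Type*} [AddCommMonoid M] (φ : (Fin (k + 1) → B) → M) (x : B)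
    (h : Fin k → B) :
    ∑ σ : Equiv.Perm (Fin (k + 1)), φ (Fin.cons x h ∘ ⇑σ) =
      ∑ e : Equiv.Perm (Fin k), φ (Fin.cons x (h ∘ ⇑e)) +
        ∑ i : Fin k, ∑ e : Equiv.Perm (Fin k), φ (Fin.cons (h i) (Function.update h i x ∘ ⇑e)) := by
  rw [← decomposeFin.symm.sum_comp, Fintype.sum_prod_type, Fin.sum_univ_succ]
  simp only [cons_comp_decomposeFin_symm_zero, cons_comp_decomposeFin_symm_succ]

end Decompose

section PartialTrace
variable {k : ℕ} {B : Type*} [Fintype B] [DecidableEq B] {ρ : Matrix (Fin k → B) (Fin k → B) ℂ}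

theorem oneTensor_mul_sum_Wperm_apply_cons (hρ : symProj * ρ * symProj = ρ) (a a' : B)
    (h : Fin k → B) :
    ((Matrix.of fun f g : Fin (k + 1) → B =>
        (if f 0 = g 0 then (1 : ℂ) else 0) * ρ (f ∘ Fin.succ) (g ∘ Fin.succ)) *
      ∑ π : Equiv.Perm (Fin (k + 1)), Wperm π : Matrix (Fin (k + 1) → B) (Fin (k + 1) → B) ℂ)
        (Fin.cons a h) (Fin.cons a' h) =
      (k.factorial : ℂ) * ((if a = a' then ρ h h else 0) +
        ∑ i, if h i = a then ρ h (Function.update h i a') else 0) := by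
  set M : Matrix (Fin (k + 1) → B) (Fin (k + 1) → B) ℂ := Matrix.of fun f g =>
    (if f 0 = g 0 then (1 : ℂ) else 0) * ρ (f ∘ Fin.succ) (g ∘ Fin.succ)
  rw [mul_sum_Wperm_apply, sum_perm_cons_comp (fun G => M (Fin.cons a h) G)]
  simp only [M, of_apply, Fin.cons_zero, Fin.cons_comp_succ,
    apply_comp_perm_right hρ, Finset.sum_const, Finset.card_univ, Fintype.card_perm,
    Fintype.card_fin, nsmul_eq_mul, ← Finset.mul_sum, ← mul_add, ite_mul, one_mul, zero_mul]
  simp only [eq_comm (a := a) (b := h _)]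

theorem ptrace_oneTensor_mul_sum_Wperm (hρ : symProj * ρ * symProj = ρ) :
    (Matrix.of fun a a' : B => ∑ h : Fin k → B,
        (((Matrix.of fun f g : Fin (k + 1) → B =>
            (if f 0 = g 0 then (1 : ℂ) else 0) * ρ (f ∘ Fin.succ) (g ∘ Fin.succ)) *
          ∑ π : Equiv.Perm (Fin (k + 1)), Wperm π : Matrix (Fin (k + 1) → B) (Fin (k + 1) → B) ℂ)
          (Fin.cons a h) (Fin.cons a' h))) =
      (k.factorial : ℂ) • (ρ.trace • (1 : Matrix B B ℂ) + ∑ i, marg1 i ρ) := by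
  ext a a'
  simp only [of_apply, oneTensor_mul_sum_Wperm_apply_cons hρ, ← Finset.mul_sum,
    Finset.sum_add_distrib]
  rw [Finset.sum_comm]
  simp [marg1, Matrix.trace, Matrix.one_apply, Matrix.sum_apply, Finset.sum_ite_irrel]

end PartialTrace

theorem stmt2_general {d k : ℕ} (hk : 0 < k)
    (ρ : Matrix (Fin k → Fin d) (Fin k → Fin d) ℂ)
    (hsym : symProj * ρ * symProj = ρ) :
    ∃ c : ℂ, c ≠ 0 ∧
      (Matrix.of fun a a' : Fin d => ∑ h : Fin k → Fin d,
          (((Matrix.of fun f g : Fin (k + 1) → Fin d =>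
              (if f 0 = g 0 then (1 : ℂ) else 0) * ρ (f ∘ Fin.succ) (g ∘ Fin.succ)) *
            ∑ π : Equiv.Perm (Fin (k + 1)), Wperm π :
              Matrix (Fin (k + 1) → Fin d) (Fin (k + 1) → Fin d) ℂ)
            (Fin.cons a h) (Fin.cons a' h))) =
        c • (ρ.trace • (1 : Matrix (Fin d) (Fin d) ℂ) + (k : ℂ) • marg1 ⟨0, hk⟩ ρ) := by
  refine ⟨k.factorial, Nat.cast_ne_zero.mpr k.factorial_ne_zero, ?_⟩
  rw [ptrace_oneTensor_mul_sum_Wperm hsym,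
    Finset.sum_congr rfl fun i _ => marg1_eq_of_symProj hsym i ⟨0, hk⟩, Finset.sum_const,
    Finset.card_univ, Fintype.card_fin, ← Nat.cast_smul_eq_nsmul ℂ k]

/-- For a state `ρ` supported on the symmetric subspace,
`Tr_{2..k+1}[(I ⊗ ρ) ∑_π W_π] ∝ tr(ρ)·I + k·ρ₁`. -/
theorem stmt2 {d k : ℕ} (hk : 0 < k)
    (ρ : Matrix (Fin k → Fin d) (Fin k → Fin d) ℂ) (hρ : IsDensity ρ)
    (hsym : symProj * ρ * symProj = ρ) :
    ∃ c : ℂ, c ≠ 0 ∧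
      (Matrix.of fun a a' : Fin d => ∑ h : Fin k → Fin d,
          (((Matrix.of fun f g : Fin (k + 1) → Fin d =>
              (if f 0 = g 0 then (1 : ℂ) else 0) * ρ (f ∘ Fin.succ) (g ∘ Fin.succ)) *
            ∑ π : Equiv.Perm (Fin (k + 1)), Wperm π :
              Matrix (Fin (k + 1) → Fin d) (Fin (k + 1) → Fin d) ℂ)
            (Fin.cons a h) (Fin.cons a' h))) =
        c • (ρ.trace • (1 : Matrix (Fin d) (Fin d) ℂ) + (k : ℂ) • marg1 ⟨0, hk⟩ ρ) :=
  stmt2_general hk ρ hsym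
end

section
/- If two-qubit Werner states ρ_{AB} = ρ_W(t₁) and ρ_{AC} = ρ_W(t₂) are consistent, i.e., there exists a three-qubit state ρ_{ABC} with Tr_C ρ_{ABC} = ρ_W(t₁) and Tr_B ρ_{ABC} = ρ_W(t₂), then t₁ + t₂ ≥ −1. -/
/-!
For a two-qudit Werner state `tr (ρ_W(t) F) = t`, where `F` is the swap. If a three-qubit state
`ρ` has marginals `ρ_W(t₁)` on `AB` and `ρ_W(t₂)` on `AC`, then
`tr (ρ (1 + S_AB + S_AC)) = 1 + t₁ + t₂`, and this is nonnegative because `1 + S_AB + S_AC` is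
positive semidefinite on three qubits: it is `3` on the symmetric subspace and has eigenvalues
`0` and `2` on the two copies of the standard representation of `S₃`, the sign representation
being absent for qubits.
-/

open Matrix Kronecker BigOperators
open scoped ComplexOrder

/-- The swap operator on `ℂ^d ⊗ ℂ^d`. -/
noncomputable def swapM (d : ℕ) : Matrix (Fin d × Fin d) (Fin d × Fin d) ℂ :=
  Matrix.of fun p q => if p.1 = q.2 ∧ p.2 = q.1 then 1 else 0

/-- The two-qudit Werner state
`ρ_W(t) = ((1+t)/2) ρ⁺ + ((1−t)/2) ρ⁻`, where `ρ⁺`, `ρ⁻` are the normalized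
projections onto the symmetric and antisymmetric subspaces. -/
noncomputable def wernerState (d : ℕ) (t : ℝ) : Matrix (Fin d × Fin d) (Fin d × Fin d) ℂ :=
  (((1 + t) / 2 : ℝ) : ℂ) • ((d * (d + 1) / 2 : ℂ))⁻¹ • ((2 : ℂ)⁻¹ • (1 + swapM d)) +
  (((1 - t) / 2 : ℝ) : ℂ) • ((d * ((d : ℂ) - 1) / 2 : ℂ))⁻¹ • ((2 : ℂ)⁻¹ • (1 - swapM d))

open scoped MatrixOrder in
theorem Matrix.PosSemidef.trace_mul_nonneg {𝕜 n : Type*} [RCLike 𝕜] [Fintype n]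
    {A B : Matrix n n 𝕜} (hA : A.PosSemidef) (hB : B.PosSemidef) : 0 ≤ (A * B).trace := by
  classical
  obtain ⟨C, rfl⟩ := CStarAlgebra.nonneg_iff_eq_star_mul_self.mp hB.nonneg
  rw [star_eq_conjTranspose, ← Matrix.mul_assoc, trace_mul_cycle]
  exact (hA.mul_mul_conjTranspose_same C).trace_nonneg

theorem swapM_mul_self (d : ℕ) : swapM d * swapM d = 1 := by
  ext p q
  simp only [swapM, mul_apply, of_apply, one_apply, Fintype.sum_prod_type, Prod.ext_iff]
  simp [ite_and, Finset.sum_ite_eq', eq_comm]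

theorem trace_swapM (d : ℕ) : (swapM d).trace = d := by
  simp only [trace, diag, swapM, of_apply, Fintype.sum_prod_type, and_iff_left_of_imp Eq.symm,
    Finset.sum_ite_eq, Finset.mem_univ, if_true, Finset.sum_const, Finset.card_univ,
    Fintype.card_fin, nsmul_eq_mul, mul_one]

theorem trace_wernerState_mul_swapM {d : ℕ} (hd : 2 ≤ d) (t : ℝ) :
    (wernerState d t * swapM d).trace = t := by
  simp only [wernerState, add_mul, sub_mul, smul_mul_assoc, one_mul, swapM_mul_self, trace_add,
    trace_sub, trace_smul, trace_swapM, trace_one, Fintype.card_prod, Fintype.card_fin,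
    smul_eq_mul]
  have hd₀ : (d : ℂ) ≠ 0 := by norm_cast; omega
  have hd₁ : (d : ℂ) - 1 ≠ 0 := by rw [sub_ne_zero]; norm_cast; omega
  have hd₂ : (d : ℂ) + 1 ≠ 0 := by norm_cast
  push_cast
  field_simp
  ring

section Tripartite

variable {α β γ : Type*} [Fintype α] [Fintype β] [Fintype γ]

noncomputable def marginalAB (ρ : Matrix (α × β × γ) (α × β × γ) ℂ) :
    Matrix (α × β) (α × β) ℂ :=
  of fun p q => ∑ c, ρ (p.1, p.2, c) (q.1, q.2, c)

noncomputable def marginalAC (ρ : Matrix (α × β × γ) (α × β × γ) ℂ) :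
    Matrix (α × γ) (α × γ) ℂ :=
  of fun p q => ∑ b, ρ (p.1, b, p.2) (q.1, b, q.2)

def embedAB [DecidableEq γ] (M : Matrix (α × β) (α × β) ℂ) :
    Matrix (α × β × γ) (α × β × γ) ℂ :=
  of fun x y => M (x.1, x.2.1) (y.1, y.2.1) * (1 : Matrix γ γ ℂ) x.2.2 y.2.2

def embedAC [DecidableEq β] (M : Matrix (α × γ) (α × γ) ℂ) :
    Matrix (α × β × γ) (α × β × γ) ℂ :=
  of fun x y => M (x.1, x.2.2) (y.1, y.2.2) * (1 : Matrix β β ℂ) x.2.1 y.2.1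

theorem trace_mul_embedAB [DecidableEq γ] (ρ : Matrix (α × β × γ) (α × β × γ) ℂ)
    (M : Matrix (α × β) (α × β) ℂ) :
    (ρ * embedAB M).trace = (marginalAB ρ * M).trace := by
  simp only [trace, diag, mul_apply, embedAB, marginalAB, of_apply, one_apply, mul_ite,
    mul_one, mul_zero, Fintype.sum_prod_type, Finset.sum_ite_eq', Finset.mem_univ, if_true,
    Finset.sum_mul]
  refine Finset.sum_congr rfl fun a _ => Finset.sum_congr rfl fun b _ => ?_
  rw [Finset.sum_comm]
  exact Finset.sum_congr rfl fun _ _ => Finset.sum_comm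

theorem trace_mul_embedAC [DecidableEq β] (ρ : Matrix (α × β × γ) (α × β × γ) ℂ)
    (M : Matrix (α × γ) (α × γ) ℂ) :
    (ρ * embedAC M).trace = (marginalAC ρ * M).trace := by
  simp only [trace, diag, mul_apply, embedAC, marginalAC, of_apply, one_apply, mul_ite,
    mul_one, mul_zero, Fintype.sum_prod_type, Finset.sum_ite_irrel, Finset.sum_const_zero,
    Finset.sum_ite_eq', Finset.mem_univ, if_true, Finset.sum_mul]
  refine Finset.sum_congr rfl fun a _ => ?_
  rw [Finset.sum_comm]
  refine Finset.sum_congr rfl fun c _ => ?_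
  rw [Finset.sum_comm]
  exact Finset.sum_congr rfl fun _ _ => Finset.sum_comm

end Tripartite

local notation "ket" x:max => (Pi.single x 1 : Fin 2 × Fin 2 × Fin 2 → ℂ)

/-- `1 + S_AB + S_AC` preserves the Hamming weight; it is `3` on `|000⟩` and `|111⟩` and
`[[2,0,1],[0,2,1],[1,1,1]]` on each block of weight one and two. -/
def swapGramQubits : Matrix (Fin 8) (Fin 2 × Fin 2 × Fin 2) ℂ :=
  of ![ket (0, 0, 0), ket (1, 1, 1), ket (0, 0, 0) + ket (1, 1, 1), ket (0, 0, 0) - ket (1, 1, 1),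
    ket (0, 0, 1) + ket (0, 1, 0) + ket (1, 0, 0), ket (0, 0, 1) - ket (0, 1, 0),
    ket (0, 1, 1) + ket (1, 0, 1) + ket (1, 1, 0), ket (1, 0, 1) - ket (1, 1, 0)]

theorem one_add_embedAB_swapM_add_embedAC_swapM :
    1 + embedAB (swapM 2) + embedAC (swapM 2) = swapGramQubitsᴴ * swapGramQubits := by
  ext x y
  fin_cases x <;> fin_cases y <;>
    simp [embedAB, embedAC, swapM, swapGramQubits, mul_apply, Fin.sum_univ_eight, one_apply]

theorem posSemidef_one_add_embedAB_swapM_add_embedAC_swapM :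
    (1 + embedAB (swapM 2) + embedAC (swapM 2) :
      Matrix (Fin 2 × Fin 2 × Fin 2) (Fin 2 × Fin 2 × Fin 2) ℂ).PosSemidef := by
  rw [one_add_embedAB_swapM_add_embedAC_swapM]
  exact posSemidef_conjTranspose_mul_self _

theorem stmt11_general (t₁ t₂ : ℝ)
    (h : ∃ ρ : Matrix (Fin 2 × Fin 2 × Fin 2) (Fin 2 × Fin 2 × Fin 2) ℂ,
      IsDensity ρ ∧
      (Matrix.of fun p q : Fin 2 × Fin 2 =>
          ∑ c : Fin 2, ρ (p.1, p.2, c) (q.1, q.2, c)) = wernerState 2 t₁ ∧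
      (Matrix.of fun p q : Fin 2 × Fin 2 =>
          ∑ b : Fin 2, ρ (p.1, b, p.2) (q.1, b, q.2)) = wernerState 2 t₂) :
    -1 ≤ t₁ + t₂ := by
  obtain ⟨ρ, ⟨hρ, htr⟩, hAB, hAC⟩ := h
  have hnonneg := hρ.trace_mul_nonneg posSemidef_one_add_embedAB_swapM_add_embedAC_swapM
  rw [Matrix.mul_add, Matrix.mul_add, trace_add, trace_add, Matrix.mul_one, htr,
    trace_mul_embedAB, trace_mul_embedAC, marginalAB, hAB, marginalAC, hAC,
    trace_wernerState_mul_swapM le_rfl, trace_wernerState_mul_swapM le_rfl] at hnonneg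
  have : (0 : ℝ) ≤ 1 + t₁ + t₂ := by exact_mod_cast hnonneg
  linarith

/-- If two-qubit Werner states `ρ_{AB} = ρ_W(t₁)` and `ρ_{AC} = ρ_W(t₂)` are consistent,
then `t₁ + t₂ ≥ -1`. -/
theorem stmt11 (t₁ t₂ : ℝ) (h₁ : -1 ≤ t₁ ∧ t₁ ≤ 1) (h₂ : -1 ≤ t₂ ∧ t₂ ≤ 1)
    (h : ∃ ρ : Matrix (Fin 2 × Fin 2 × Fin 2) (Fin 2 × Fin 2 × Fin 2) ℂ,
      IsDensity ρ ∧
      (Matrix.of fun p q : Fin 2 × Fin 2 =>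
          ∑ c : Fin 2, ρ (p.1, p.2, c) (q.1, q.2, c)) = wernerState 2 t₁ ∧
      (Matrix.of fun p q : Fin 2 × Fin 2 =>
          ∑ b : Fin 2, ρ (p.1, b, p.2) (q.1, b, q.2)) = wernerState 2 t₂) :
    -1 ≤ t₁ + t₂ :=
  stmt11_general t₁ t₂ h
end

section
/- If a bipartite density matrix σ_{AB} on H_A ⊗ H_B (dim H_B = d_B) satisfies (d_B + 1) σ_{AB} ≥ σ_A ⊗ I_B (in the positive-semidefinite ordering), then σ_{AB} is separable. -/
open Matrix Kronecker BigOperators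
open scoped ComplexOrder

/-!
With `X := (d_B + 1) σ_AB - σ_A ⊗ I_B`, positive semidefinite by hypothesis and with
`Tr_B X = σ_A`, we have `(d_B + 1) σ_AB = Tr_B X ⊗ I_B + X`. So it suffices that
`X ↦ Tr_B X ⊗ I_B + X` maps positive semidefinite matrices into the cone spanned by products of
positive semidefinite matrices, whose trace-one elements are separable. This map is a positive
combination of local compressions `X ↦ (I ⊗ |y⟩⟨y|) X (I ⊗ |y⟩⟨y|)`, each of which sends `X ≥ 0`
to a product `Y ⊗ |y⟩⟨y|` with `Y ≥ 0`: average over the vectors `y` of independent `N`-th roots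
of unity (`N ≥ 3`), whose fourth moments are those of a complex Gaussian vector except on the
diagonal, and add back the compressions by the standard basis vectors of `B` to fix the diagonal.
-/

section SepCone

variable {A B : Type*}

variable (A B) in
noncomputable def sepCone [Fintype A] [Fintype B] : PointedCone ℝ (Matrix (A × B) (A × B) ℂ) :=
  PointedCone.hull ℝ {M | ∃ P Q, PosSemidef P ∧ PosSemidef Q ∧ M = P ⊗ₖ Q}

lemma Matrix.PosSemidef.exists_eq_smul_isDensity {n : Type*} [Fintype n] [Nonempty n]
    {P : Matrix n n ℂ} (hP : P.PosSemidef) : ∃ t : ℝ, 0 ≤ t ∧ ∃ ρ, IsDensity ρ ∧ P = t • ρ := by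
  classical
  by_cases h0 : P.trace = 0
  · let e : n → ℂ := Pi.single (Classical.arbitrary n) 1
    refine ⟨0, le_rfl, vecMulVec e (star e), ⟨posSemidef_vecMulVec_self_star e, ?_⟩, ?_⟩
    · simp [e, trace_vecMulVec]
    · rw [zero_smul, ← hP.trace_eq_zero_iff, h0]
  · obtain ⟨hre, him⟩ := Complex.nonneg_iff.mp hP.trace_nonneg
    have ht : ((P.trace.re : ℝ) : ℂ) = P.trace := Complex.ext rfl (by simpa using him)
    have hpos : 0 < P.trace.re := lt_of_le_of_ne hre fun h => h0 (by rw [← ht, ← h]; simp)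
    refine ⟨P.trace.re, hre, P.trace.re⁻¹ • P, ⟨hP.smul (inv_nonneg.mpr hre), ?_⟩, ?_⟩
    · rw [trace_smul, Complex.real_smul, Complex.ofReal_inv, ht, inv_mul_cancel₀ h0]
    · rw [smul_smul, mul_inv_cancel₀ hpos.ne', one_smul]

variable [Fintype A] [Fintype B]

lemma isSep_of_mem_sepCone {σ : Matrix (A × B) (A × B) ℂ} (hσ : σ ∈ sepCone A B)
    (htr : σ.trace = 1) : IsSep σ := by
  have hne : Nonempty (A × B) := by
    by_contra h
    rw [not_nonempty_iff] at h
    simp [trace] at htr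
  have : Nonempty A := ⟨hne.some.1⟩
  have : Nonempty B := ⟨hne.some.2⟩
  obtain ⟨n, c, g, rfl⟩ := Submodule.mem_span_set'.mp hσ
  choose P Q hP hQ hPQ using fun i => (g i).2
  choose s hs ρ hρ hPρ using fun i => (hP i).exists_eq_smul_isDensity
  choose t ht τ hτ hQτ using fun i => (hQ i).exists_eq_smul_isDensity
  have hterm (i : Fin n) : c i • (g i : Matrix (A × B) (A × B) ℂ) =
      ((c i * s i * t i : ℝ) : ℂ) • (ρ i ⊗ₖ τ i) := by
    rw [hPQ i, hPρ i, hQτ i, smul_kronecker, kronecker_smul, smul_smul, ← Nonneg.coe_smul,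
      smul_smul, Complex.coe_smul, mul_assoc]
  refine ⟨n, fun i => c i * s i * t i, ρ, τ, fun i => ?_, ?_, hρ, hτ,
    Finset.sum_congr rfl fun i _ => hterm i⟩
  · exact mul_nonneg (mul_nonneg (c i).2 (hs i)) (ht i)
  · rw [Finset.sum_congr rfl fun i _ => hterm i, trace_sum] at htr
    simp only [trace_smul, trace_kronecker, (hρ _).2, (hτ _).2, mul_one, smul_eq_mul] at htr
    exact_mod_cast htr

end SepCone

section Compression

variable {A B : Type*} [Fintype A] [DecidableEq A] [Fintype B]

lemma one_kronecker_vecMulVec_mul_mul_apply (u : B → ℂ) (X : Matrix (A × B) (A × B) ℂ)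
    (a a' : A) (c c' : B) :
    ((1 ⊗ₖ vecMulVec u (star u) * X * (1 ⊗ₖ vecMulVec u (star u)) : Matrix (A × B) (A × B) ℂ))
      (a, c) (a', c') =
      ∑ b', ∑ b, u c * star (u b) * X (a, b) (a', b') * (u b' * star (u c')) := by
  simp [mul_apply, Fintype.sum_prod_type, one_apply, vecMulVec_apply, Finset.sum_mul]

lemma one_kronecker_vecMulVec_mul_mul_mem_sepCone {X : Matrix (A × B) (A × B) ℂ}
    (hX : X.PosSemidef) (u : B → ℂ) :
    (1 ⊗ₖ vecMulVec u (star u) * X * (1 ⊗ₖ vecMulVec u (star u)) : Matrix (A × B) (A × B) ℂ) ∈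
      sepCone A B := by
  let K : Matrix (A × B) A ℂ := Matrix.of fun p a => (1 : Matrix A A ℂ) p.1 a * u p.2
  refine PointedCone.subset_hull ⟨Kᴴ * X * K, vecMulVec u (star u),
    hX.conjTranspose_mul_mul_same K, posSemidef_vecMulVec_self_star u, ?_⟩
  ext ⟨a, c⟩ ⟨a', c'⟩
  rw [one_kronecker_vecMulVec_mul_mul_apply]
  simp [K, mul_apply, Fintype.sum_prod_type, one_apply, vecMulVec_apply, Finset.mul_sum,
    apply_ite (starRingEnd ℂ), mul_comm, mul_left_comm]

end Compression

section Phase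

variable {B : Type*}

lemma forall_apply_add_apply_eq_iff [DecidableEq B] {R : Type*} [Ring R] (h2 : (2 : R) ≠ 0)
    (b b' c c' : B) :
    (∀ ω : B → R, ω b + ω c' = ω b' + ω c) ↔ (b = b' ∧ c = c') ∨ (b = c ∧ b' = c') := by
  have h1 : (1 : R) ≠ 0 := fun h => h2 (by rw [← one_add_one_eq_two, h, add_zero])
  refine ⟨fun h => ?_, ?_⟩
  · have single_eq_one {x y : B} (hxy : (1 : R) = (Pi.single x 1 : B → R) y) : y = x := by
      by_contra hne
      rw [Pi.single_eq_of_ne hne] at hxy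
      exact h1 hxy
    by_cases hbb' : b = b'
    · subst hbb'
      have := add_left_cancel (h (Pi.single c' 1))
      exact Or.inl ⟨rfl, single_eq_one (by simpa using this)⟩
    by_cases hbc : b = c
    · subst hbc
      have := h (Pi.single c' 1)
      rw [add_comm] at this
      exact Or.inr ⟨rfl, single_eq_one (by simpa using add_right_cancel this)⟩
    have := h (Pi.single b 1)
    rw [Pi.single_eq_same, Pi.single_eq_of_ne (Ne.symm hbb'), Pi.single_eq_of_ne (Ne.symm hbc)]
      at this
    by_cases hcb : c' = b
    · simp [hcb, one_add_one_eq_two, h2] at this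
    · simp [Pi.single_eq_of_ne hcb, h1] at this
  · rintro (⟨rfl, rfl⟩ | ⟨rfl, rfl⟩) ω <;> abel

lemma sum_sum_mul_ite_pairing [Fintype B] [DecidableEq B] (f : B → B → ℂ) (c c' : B) :
    ∑ b, ∑ b', f b b' * (if (b = b' ∧ c = c') ∨ (b = c ∧ b' = c') then 1 else 0) =
      if c = c' then ∑ b, f b b else f c c' := by
  by_cases hcc' : c = c'
  · subst hcc'
    have hpair (b b' : B) : (b = b' ∨ (b = c ∧ b' = c)) ↔ b = b' :=
      ⟨by rintro (h | ⟨rfl, rfl⟩) <;> trivial, Or.inl⟩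
    simp only [and_true, hpair]
    simp
  · simp [hcc', ite_and]

variable {N : ℕ} [NeZero N]

noncomputable def phaseVec (ω : B → ZMod N) : B → ℂ := fun b => ZMod.stdAddChar (ω b)

/-- For `N = 2` the pairing `b = c'`, `b' = c` would also contribute. -/
lemma sum_phaseVec_moment [Fintype B] [DecidableEq B] (hN : 2 < N) (b b' c c' : B) :
    ∑ ω : B → ZMod N, phaseVec ω c * star (phaseVec ω b) * phaseVec ω b' * star (phaseVec ω c') =
      if (b = b' ∧ c = c') ∨ (b = c ∧ b' = c') then (N : ℂ) ^ Fintype.card B else 0 := by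
  let L : (B → ZMod N) →+ ZMod N :=
    Pi.evalAddMonoidHom (fun _ => ZMod N) c - Pi.evalAddMonoidHom (fun _ => ZMod N) b +
      Pi.evalAddMonoidHom (fun _ => ZMod N) b' - Pi.evalAddMonoidHom (fun _ => ZMod N) c'
  have hL (ω : B → ZMod N) :
      phaseVec ω c * star (phaseVec ω b) * phaseVec ω b' * star (phaseVec ω c') =
        ZMod.stdAddChar.compAddMonoidHom L ω := by
    simp [L, phaseVec, sub_eq_add_neg, AddChar.map_add_eq_mul, AddChar.map_neg_eq_conj]
  have h2 : (2 : ZMod N) ≠ 0 := by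
    exact_mod_cast (ZMod.natCast_eq_zero_iff 2 N).not.mpr (Nat.not_dvd_of_pos_of_lt two_pos hN)
  have hL0 : ZMod.stdAddChar.compAddMonoidHom L = 0 ↔ (b = b' ∧ c = c') ∨ (b = c ∧ b' = c') := by
    rw [← forall_apply_add_apply_eq_iff h2, DFunLike.ext_iff]
    refine forall_congr' fun ω => ?_
    rw [AddChar.compAddMonoidHom_apply, AddChar.zero_apply,
      ← AddChar.map_zero_eq_one (ZMod.stdAddChar (N := N)), ZMod.injective_stdAddChar.eq_iff]
    simp only [L, AddMonoidHom.sub_apply, AddMonoidHom.add_apply, Pi.evalAddMonoidHom_apply,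
      sub_add_eq_add_sub, sub_eq_iff_eq_add', add_zero]
    rw [eq_comm, add_comm (ω c)]
  classical
  simp_rw [hL, AddChar.sum_eq_ite, hL0, Fintype.card_fun, ZMod.card]
  push_cast
  rfl

end Phase

section Identity

variable {A B : Type*} [Fintype A] [DecidableEq A] [Fintype B] [DecidableEq B] {N : ℕ} [NeZero N]

lemma ptraceB_kronecker_one_add_eq (hN : 2 < N) (X : Matrix (A × B) (A × B) ℂ) :
    ptraceB X ⊗ₖ (1 : Matrix B B ℂ) + X =
      ((N : ℝ) ^ Fintype.card B)⁻¹ • ∑ ω : B → ZMod N,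
          (1 ⊗ₖ vecMulVec (phaseVec ω) (star (phaseVec ω)) * X *
            (1 ⊗ₖ vecMulVec (phaseVec ω) (star (phaseVec ω))) : Matrix (A × B) (A × B) ℂ) +
        ∑ j : B, (1 ⊗ₖ vecMulVec (Pi.single j 1) (star (Pi.single j 1)) * X *
            (1 ⊗ₖ vecMulVec (Pi.single j 1) (star (Pi.single j 1))) :
              Matrix (A × B) (A × B) ℂ) := by
  ext ⟨a, c⟩ ⟨a', c'⟩
  simp only [Matrix.add_apply, Matrix.smul_apply, Matrix.sum_apply,
    one_kronecker_vecMulVec_mul_mul_apply]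
  have hphase : ((N : ℝ) ^ Fintype.card B)⁻¹ • ∑ ω : B → ZMod N, ∑ b', ∑ b,
      phaseVec ω c * star (phaseVec ω b) * X (a, b) (a', b') *
        (phaseVec ω b' * star (phaseVec ω c')) =
      if c = c' then ∑ b, X (a, b) (a', b) else X (a, c) (a', c') := by
    calc _ = ∑ b', ∑ b, X (a, b) (a', b') * (((N : ℂ) ^ Fintype.card B)⁻¹ * ∑ ω : B → ZMod N,
          phaseVec ω c * star (phaseVec ω b) * phaseVec ω b' * star (phaseVec ω c')) := by
          simp only [Complex.real_smul, Finset.mul_sum]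
          rw [Finset.sum_comm]
          refine Finset.sum_congr rfl fun b' _ => ?_
          rw [Finset.sum_comm]
          refine Finset.sum_congr rfl fun b _ => Finset.sum_congr rfl fun ω _ => ?_
          push_cast
          ring
      _ = ∑ b', ∑ b, X (a, b) (a', b') *
          (if (b = b' ∧ c = c') ∨ (b = c ∧ b' = c') then 1 else 0) := by
          have hNd : (N : ℂ) ^ Fintype.card B ≠ 0 :=
            pow_ne_zero _ (Nat.cast_ne_zero.mpr (NeZero.ne N))
          simp_rw [sum_phaseVec_moment hN, mul_ite, mul_zero, inv_mul_cancel₀ hNd]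
      _ = _ := by rw [Finset.sum_comm, sum_sum_mul_ite_pairing _ c c']
  rw [hphase]
  by_cases hcc' : c = c' <;> simp [Pi.single_apply, ptraceB, one_apply, hcc']

end Identity

section PartialTrace

variable {A B : Type*} [Fintype B]

lemma ptraceB_sub (M M' : Matrix (A × B) (A × B) ℂ) :
    ptraceB (M - M') = ptraceB M - ptraceB M' := by
  ext a a'
  simp [ptraceB, Finset.sum_sub_distrib]

lemma ptraceB_smul (z : ℂ) (M : Matrix (A × B) (A × B) ℂ) : ptraceB (z • M) = z • ptraceB M := by
  ext a a'
  simp [ptraceB, Finset.mul_sum]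

lemma ptraceB_kronecker_one [DecidableEq B] (Y : Matrix A A ℂ) :
    ptraceB (Y ⊗ₖ (1 : Matrix B B ℂ)) = (Fintype.card B : ℂ) • Y := by
  ext a a'
  simp [ptraceB, one_apply, mul_comm]

lemma ptraceB_kronecker_one_add_mem_sepCone [Fintype A] [DecidableEq B]
    {X : Matrix (A × B) (A × B) ℂ} (hX : X.PosSemidef) :
    ptraceB X ⊗ₖ (1 : Matrix B B ℂ) + X ∈ sepCone A B := by
  classical
  rw [ptraceB_kronecker_one_add_eq (N := 3) (by norm_num) X]
  refine add_mem (PointedCone.smul_mem _ (by positivity) (sum_mem fun ω _ => ?_))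
    (sum_mem fun j _ => ?_) <;>
  exact one_kronecker_vecMulVec_mul_mul_mem_sepCone hX _

end PartialTrace

theorem stmt14_general {A B : Type*} [Fintype A] [Fintype B] [DecidableEq B]
    (σAB : Matrix (A × B) (A × B) ℂ) (hσ : IsDensity σAB)
    (h : ((Fintype.card B + 1 : ℂ) • σAB -
      ptraceB σAB ⊗ₖ (1 : Matrix B B ℂ)).PosSemidef) :
    IsSep σAB := by
  set M := (Fintype.card B + 1 : ℂ) • σAB - ptraceB σAB ⊗ₖ (1 : Matrix B B ℂ)
  have hM : ptraceB M ⊗ₖ (1 : Matrix B B ℂ) + M = (Fintype.card B + 1 : ℂ) • σAB := by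
    rw [ptraceB_sub, ptraceB_smul, ptraceB_kronecker_one, add_smul, one_smul, add_sub_cancel_left,
      add_sub_cancel]
  have hmem : σAB ∈ sepCone A B := by
    convert PointedCone.smul_mem _ (r := (Fintype.card B + 1 : ℝ)⁻¹) (by positivity)
      (hM ▸ ptraceB_kronecker_one_add_mem_sepCone h) using 1
    rw [← Complex.coe_smul, smul_smul]
    push_cast
    rw [inv_mul_cancel₀ (Nat.cast_add_one_ne_zero _), one_smul]
  exact isSep_of_mem_sepCone hmem hσ.2

/-- If `(d_B + 1) σ_{AB} ≥ σ_A ⊗ I_B` then `σ_{AB}` is separable. -/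
theorem stmt14 {A B : Type*} [Fintype A] [DecidableEq A] [Fintype B] [DecidableEq B]
    (σAB : Matrix (A × B) (A × B) ℂ) (hσ : IsDensity σAB)
    (h : ((Fintype.card B + 1 : ℂ) • σAB -
      ptraceB σAB ⊗ₖ (1 : Matrix B B ℂ)).PosSemidef) :
    IsSep σAB :=
  stmt14_general σAB hσ h
end
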